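/- Suppose x ∈ R^n is s-sparse and x̂ ∈ R^n satisfies ‖x̂‖₁ - α‖x̂‖₂ ≤ ‖x‖₁ - α‖x‖₂ with 0 < α ≤ 1. Then h = x̂ - x satisfies ‖h_{-max(s)}‖₁ ≤ ‖h_{max(s)}‖₁ + α‖h‖₂. -/

import Mathlib

open Finset

noncomputable def l1 {n : ℕ} (x : Fin n → ℝ) : ℝ := ∑ i, |x i|
noncomputable def l2 {n : ℕ} (x : Fin n → ℝ) : ℝ := Real.sqrt (∑ i, (x i) ^ 2)
noncomputable def linf {n : ℕ} (x : Fin n → ℝ) : ℝ := ‖x‖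

/-- `restrict T x` is the vector equal to `x` on `T` and `0` elsewhere. -/
def restrict {n : ℕ} (T : Finset (Fin n)) (x : Fin n → ℝ) : Fin n → ℝ :=
  fun i => if i ∈ T then x i else 0

/-- `T` indexes `s` largest-in-absolute-value entries of `h`. -/
def IsMaxS {n : ℕ} (s : ℕ) (h : Fin n → ℝ) (T : Finset (Fin n)) : Prop :=
  T.card = s ∧ ∀ i ∈ T, ∀ j ∉ T, |h j| ≤ |h i|

/-- number of nonzero entries. -/
noncomputable def l0 {n : ℕ} (x : Fin n → ℝ) : ℕ := (Finset.univ.filter fun i => x i ≠ 0).card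

/-
Let `h = xhat - x` and let `S` be the support of `x`. Coordinatewise, `|xhat i| ≥ |x i| - |h i|` on `S`
and `|xhat i| = |h i|` off `S`, so `‖xhat‖₁ ≥ ‖x‖₁ + ‖h_{Sᶜ}‖₁ - ‖h_S‖₁`. The triangle inequality gives
`‖xhat‖₂ ≤ ‖x‖₂ + ‖h‖₂`, and together with the hypothesis this yields `‖h_{Sᶜ}‖₁ ≤ ‖h_S‖₁ + α‖h‖₂`.
Since `|S| ≤ s`, the `s` largest entries of `h` carry at least as much ℓ1 mass as `h_S`, so replacing
`S` by the index set `T` of those entries only improves both sides.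
-/

theorem sum_le_sum_of_card_le_of_forall_le {ι M : Type*} [AddCommMonoid M] [LinearOrder M]
    [IsOrderedAddMonoid M] {A B : Finset ι} (f : ι → M) (hcard : #A ≤ #B)
    (hB : ∀ b ∈ B, 0 ≤ f b) (hle : ∀ a ∈ A, ∀ b ∈ B, f a ≤ f b) :
    ∑ a ∈ A, f a ≤ ∑ b ∈ B, f b := by
  rcases B.eq_empty_or_nonempty with rfl | hne
  · simp [card_eq_zero.mp (Nat.le_zero.mp hcard)]
  obtain ⟨b₀, hb₀, hmin⟩ := B.exists_min_image f hne
  calc ∑ a ∈ A, f a ≤ #A • f b₀ := sum_le_card_nsmul _ _ _ fun a ha => hle a ha b₀ hb₀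
    _ ≤ #B • f b₀ := nsmul_le_nsmul_left (hB b₀ hb₀) hcard
    _ ≤ ∑ b ∈ B, f b := card_nsmul_le_sum _ _ _ hmin

theorem IsMaxS.sum_abs_le {n s : ℕ} {h : Fin n → ℝ} {T : Finset (Fin n)} (hT : IsMaxS s h T)
    {S : Finset (Fin n)} (hS : #S ≤ s) :
    ∑ i ∈ S, |h i| ≤ ∑ i ∈ T, |h i| := by
  obtain ⟨hcard, hmax⟩ := hT
  have hdiff : ∑ i ∈ S \ T, |h i| ≤ ∑ i ∈ T \ S, |h i| := by
    refine sum_le_sum_of_card_le_of_forall_le _ ?_ (fun _ _ => abs_nonneg _) ?_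
    · have := card_sdiff_add_card_inter S T
      have := card_sdiff_add_card_inter T S
      rw [inter_comm] at this
      omega
    · intro j hj i hi
      exact hmax i (mem_sdiff.mp hi).1 j (mem_sdiff.mp hj).2
  have hsplitS := sum_inter_add_sum_sdiff S T fun i => |h i|
  have hsplitT := sum_inter_add_sum_sdiff T S fun i => |h i|
  rw [inter_comm] at hsplitT
  linarith

theorem l1_restrict {n : ℕ} (T : Finset (Fin n)) (h : Fin n → ℝ) :
    l1 (restrict T h) = ∑ i ∈ T, |h i| := by
  simp only [l1, _root_.restrict, apply_ite abs, abs_zero]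
  rw [sum_ite_mem, univ_inter]

theorem l2_eq_norm {n : ℕ} (x : Fin n → ℝ) : l2 x = ‖WithLp.toLp 2 x‖ := by
  simp [l2, EuclideanSpace.norm_eq]

theorem l2_sub_l2_le {n : ℕ} (x y : Fin n → ℝ) : l2 x - l2 y ≤ l2 (x - y) := by
  simpa only [l2_eq_norm, WithLp.toLp_sub] using norm_sub_norm_le _ _

theorem l1_add_sum_compl_sub_sum_le {n : ℕ} {x : Fin n → ℝ} {S : Finset (Fin n)}
    (hx : ∀ i ∉ S, x i = 0) (y : Fin n → ℝ) :
    l1 x + ∑ i ∈ Sᶜ, |y i - x i| - ∑ i ∈ S, |y i - x i| ≤ l1 y := by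
  have hxS : l1 x = ∑ i ∈ S, |x i| := by
    rw [l1, ← sum_add_sum_compl S, add_eq_left]
    exact sum_eq_zero fun i hi => by rw [hx i (mem_compl.mp hi), abs_zero]
  have hon : ∑ i ∈ S, (|x i| - |y i - x i|) ≤ ∑ i ∈ S, |y i| := by
    refine sum_le_sum fun i _ => ?_
    have := abs_sub_abs_le_abs_sub (x i) (y i)
    rw [abs_sub_comm (x i)] at this
    linarith
  have hoff : ∑ i ∈ Sᶜ, |y i - x i| = ∑ i ∈ Sᶜ, |y i| :=
    sum_congr rfl fun i hi => by rw [hx i (mem_compl.mp hi), sub_zero]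
  rw [hxS, l1, ← sum_add_sum_compl S fun i => |y i|, hoff]
  rw [sum_sub_distrib] at hon
  linarith

theorem sum_compl_le_of_l1_sub_l2_le {n : ℕ} {x : Fin n → ℝ} {S : Finset (Fin n)}
    (hx : ∀ i ∉ S, x i = 0) {α : ℝ} (hα : 0 ≤ α) {y : Fin n → ℝ}
    (hmin : l1 y - α * l2 y ≤ l1 x - α * l2 x) :
    ∑ i ∈ Sᶜ, |(y - x) i| ≤ ∑ i ∈ S, |(y - x) i| + α * l2 (y - x) := by
  have hl1 := l1_add_sum_compl_sub_sum_le hx y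
  have hl2 := mul_le_mul_of_nonneg_left (l2_sub_l2_le y x) hα
  simp only [Pi.sub_apply]
  linarith

theorem stmt5_general {n s : ℕ} (x xhat : Fin n → ℝ) (α : ℝ) (hα0 : 0 < α)
    (hsparse : l0 x ≤ s)
    (hmin : l1 xhat - α * l2 xhat ≤ l1 x - α * l2 x)
    (Th : Finset (Fin n)) (hTh : IsMaxS s (xhat - x) Th) :
    l1 (restrict Thᶜ (xhat - x)) ≤
      l1 (restrict Th (xhat - x)) + α * l2 (xhat - x) := by
  set S := univ.filter fun i => x i ≠ 0
  have hx : ∀ i ∉ S, x i = 0 := fun i hi => by simpa [S] using hi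
  have hcone := sum_compl_le_of_l1_sub_l2_le hx hα0.le hmin
  have hST := hTh.sum_abs_le (S := S) hsparse
  have hsplitS := sum_add_sum_compl S fun i => |(xhat - x) i|
  have hsplitT := sum_add_sum_compl Th fun i => |(xhat - x) i|
  rw [l1_restrict, l1_restrict]
  linarith

theorem stmt5 {n s : ℕ} (x xhat : Fin n → ℝ) (α : ℝ) (hα0 : 0 < α) (hα1 : α ≤ 1)
    (hsparse : l0 x ≤ s)
    (hmin : l1 xhat - α * l2 xhat ≤ l1 x - α * l2 x)
    (Th : Finset (Fin n)) (hTh : IsMaxS s (xhat - x) Th) :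
    l1 (restrict Thᶜ (xhat - x)) ≤
      l1 (restrict Th (xhat - x)) + α * l2 (xhat - x) :=
  stmt5_general x xhat α hα0 hsparse hmin Th hTh
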